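/- If Q is a finite quandle whose enveloping group G_Q is isomorphic to ℤ × ℤ, then Q is isomorphic to U(n,m) for some coprime positive integers n and m. -/

import Mathlib

open Quandles

/-- The underlying set of the quandle `U(n,m)`: elements `x_i` (`i ∈ ZMod n`)
and `y_r` (`r ∈ ZMod m`). -/
def UQ (n m : ℕ) : Type := ZMod n ⊕ ZMod m

namespace UQ

/-- The quandle operation of `U(n,m)` (as the inverse action `z ◃⁻¹ w = w * z` of the paper):
`x_i * x_j = x_i`, `x_i * y_r = x_{i+1}`, `y_r * y_s = y_r`, `y_r * x_i = y_{r+1}`. -/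
def op {n m : ℕ} (x y : UQ n m) : UQ n m :=
  match x, y with
  | Sum.inl _, Sum.inl i => Sum.inl i
  | Sum.inl _, Sum.inr r => Sum.inr (r + 1)
  | Sum.inr _, Sum.inl i => Sum.inl (i + 1)
  | Sum.inr _, Sum.inr r => Sum.inr r

/-- The inverse operation. -/
def opInv {n m : ℕ} (x y : UQ n m) : UQ n m :=
  match x, y with
  | Sum.inl _, Sum.inl i => Sum.inl i
  | Sum.inl _, Sum.inr r => Sum.inr (r - 1)
  | Sum.inr _, Sum.inl i => Sum.inl (i - 1)
  | Sum.inr _, Sum.inr r => Sum.inr r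

instance quandle (n m : ℕ) : Quandle (UQ n m) where
  act := opInv
  invAct := op
  self_distrib := by
    rintro (a | a) (b | b) (c | c) <;> simp [op, opInv] <;> rfl
  left_inv := by
    rintro (a | a) (b | b) <;> simp [op, opInv] <;> rfl
  right_inv := by
    rintro (a | a) (b | b) <;> simp [op, opInv] <;> rfl
  fix := by
    rintro (a | a) <;> simp [op, opInv] <;> rfl

end UQ

/-!
Since `G_Q ≅ ℤ × ℤ` is abelian, `toEnvelGroup` is constant on the orbits of `G_Q` acting on
`Q`, and the images of orbit representatives form a `ℤ`-basis of `ℤ × ℤ`: they span because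
`Q` generates `G_Q`, and they are independent because sending each point to the indicator of
its orbit is a quandle map to an abelian group. So `Q` has exactly two orbits `A ∋ a` and
`B ∋ b`. Every point of `A` acts like `a`, which fixes `A` pointwise; as `G_Q` is generated by
the images of `a` and `b`, the orbit `A` is a single cycle of the action of `b`, say of length
`n`, and symmetrically `B` is an `m`-cycle of `a`: this is `U(n,m)`.
For `d = gcd n m`, `U(n,m)` maps to the conjugation quandle of the Heisenberg group of affine
permutations of `(ZMod d)²`, where the images of `x₀` and `y₀` commute only if `d = 1`.
-/

open MulAction Subgroup

theorem Subgroup.exists_zpow_mul_zpow_eq_of_mem_closure_pair {G : Type*} [Group G]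
    (hG : ∀ g h : G, Commute g h) {x y g : G} (hg : g ∈ closure {x, y}) :
    ∃ i j : ℤ, x ^ i * y ^ j = g :=
  letI : CommGroup G := { ‹Group G› with mul_comm := fun a b => (hG a b).eq }
  Subgroup.mem_closure_pair.mp hg

theorem commute_of_mulEquiv {G H : Type*} [Group G] [CommGroup H] (F : G ≃* H) (g h : G) :
    Commute g h :=
  F.symm_apply_apply g ▸ F.symm_apply_apply h ▸ (Commute.all (F g) (F h)).map F.symm

theorem MulAction.orbitZPowersEquiv_symm_sub_one {G X : Type*} [Group G] [MulAction G X]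
    (g : G) (x : X) (k : ZMod (Function.minimalPeriod (g • ·) x)) :
    ((orbitZPowersEquiv g x).symm (k - 1) : X) =
      g⁻¹ • ((orbitZPowersEquiv g x).symm k : X) := by
  obtain ⟨k, rfl⟩ := ZMod.intCast_surjective k
  rw [← Int.cast_one, ← Int.cast_sub, orbitZPowersEquiv_symm_apply',
    orbitZPowersEquiv_symm_apply']
  simp only [Subgroup.smul_def, orbit.coe_smul, smul_smul, SubgroupClass.coe_zpow]
  congr 1
  group

theorem MulAction.exists_pair_of_card_orbitRel_quotient_eq_two {G X : Type*} [Group G]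
    [MulAction G X] (h : Nat.card (orbitRel.Quotient G X) = 2) :
    ∃ a b : X, b ∉ orbit G a ∧ ∀ x, x ∈ orbit G a ∨ x ∈ orbit G b := by
  obtain ⟨o₁, o₂, hne, huniv⟩ := Nat.card_eq_two_iff.mp h
  have hmem (x : X) (o : orbitRel.Quotient G X) : x ∈ orbit G o.out ↔ ⟦x⟧ = o := by
    rw [← orbitRel_apply, ← Quotient.eq, Quotient.out_eq]
  refine ⟨o₁.out, o₂.out, by rw [hmem, Quotient.out_eq]; exact hne.symm, fun x => ?_⟩
  have hx : ⟦x⟧ ∈ ({o₁, o₂} : Set _) := huniv ▸ Set.mem_univ _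
  simpa [hmem] using hx

theorem Equiv.symm_act {S T : Type*} [Shelf S] [Shelf T] (e : S ≃ T)
    (he : ∀ x y, e (x ◃ y) = e x ◃ e y) (x y : T) :
    e.symm (x ◃ y) = e.symm x ◃ e.symm y := by
  rw [e.symm_apply_eq, he, e.apply_symm_apply, e.apply_symm_apply]

namespace Rack

section

variable {R : Type*} [Rack R]

instance envelMulAction : MulAction (EnvelGroup R) R := MulAction.compHom R envelAction

theorem toEnvelGroup_smul (x y : R) : toEnvelGroup R x • y = x ◃ y := rfl

theorem toEnvelGroup_map_apply {G : Type*} [Group G] (f : R →◃ Quandle.Conj G) (x : R) :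
    toEnvelGroup.map f (toEnvelGroup R x) = f x := rfl

theorem closure_range_toEnvelGroup : closure (Set.range (toEnvelGroup R)) = ⊤ := by
  refine eq_top_iff.mpr fun g _ => Quotient.inductionOn g fun w => ?_
  induction w with
  | unit => exact one_mem _
  | incl x => exact subset_closure ⟨x, rfl⟩
  | mul a b iha ihb => exact mul_mem iha ihb
  | inv a iha => exact inv_mem iha

theorem toEnvelGroup_smul_eq_conj (g : EnvelGroup R) (x : R) :
    toEnvelGroup R (g • x) = g * toEnvelGroup R x * g⁻¹ := by
  have hg : g ∈ closure (Set.range (toEnvelGroup R)) := by simp [closure_range_toEnvelGroup]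
  induction hg using closure_induction generalizing x with
  | mem _ hz =>
    obtain ⟨y, rfl⟩ := hz
    exact ShelfHom.map_act (toEnvelGroup R)
  | one => simp
  | mul g h _ _ ihg ihh => rw [mul_smul, ihg, ihh]; group
  | inv g _ ihg =>
    have h := ihg (g⁻¹ • x)
    rw [smul_inv_smul] at h
    rw [h]
    group

section Abelian

variable (hG : ∀ g h : EnvelGroup R, Commute g h)
include hG

theorem toEnvelGroup_eq_of_mem_orbit {x y : R} (hy : y ∈ orbit (EnvelGroup R) x) :
    toEnvelGroup R y = toEnvelGroup R x := by
  obtain ⟨g, rfl⟩ := hy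
  rw [toEnvelGroup_smul_eq_conj, (hG _ _).mul_inv_cancel]

theorem act_eq_smul_of_mem_orbit {x y : R} (hy : y ∈ orbit (EnvelGroup R) x) (z : R) :
    y ◃ z = toEnvelGroup R x • z := by
  rw [← toEnvelGroup_smul, toEnvelGroup_eq_of_mem_orbit hG hy]

theorem closure_pair_eq_top {a b : R}
    (hcover : ∀ x, x ∈ orbit (EnvelGroup R) a ∨ x ∈ orbit (EnvelGroup R) b) :
    closure {toEnvelGroup R a, toEnvelGroup R b} = ⊤ := by
  rw [eq_top_iff, ← closure_range_toEnvelGroup]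
  refine closure_mono ?_
  rintro _ ⟨x, rfl⟩
  rcases hcover x with h | h <;> simp [toEnvelGroup_eq_of_mem_orbit hG h]

end Abelian

noncomputable def orbitIndicator (R : Type*) [Rack R] :
    R →◃ Quandle.Conj (Multiplicative (orbitRel.Quotient (EnvelGroup R) R →₀ ℤ)) where
  toFun x := Multiplicative.ofAdd (Finsupp.single ⟦x⟧ 1)
  map_act' {x y} := by
    rw [Quandle.conj_act_eq_conj, mul_inv_cancel_comm, ← toEnvelGroup_smul,
      orbitRel.Quotient.quotient_smul_eq]

variable {A : Type*} [AddCommGroup A] (F : EnvelGroup R ≃* Multiplicative A)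

theorem linearIndependent_orbit_out :
    LinearIndependent ℤ fun o : orbitRel.Quotient (EnvelGroup R) R =>
      (F (toEnvelGroup R o.out)).toAdd := by
  let L : A →+ (orbitRel.Quotient (EnvelGroup R) R →₀ ℤ) :=
    AddMonoidHom.toMultiplicative.symm
      ((toEnvelGroup.map (orbitIndicator R)).comp F.symm.toMonoidHom)
  refine LinearIndependent.of_comp L.toIntLinearMap ?_
  have hL (o) : L (F (toEnvelGroup R o.out)).toAdd = Finsupp.single o 1 := by
    simp only [L, AddMonoidHom.toMultiplicative_symm_apply_apply, MonoidHom.comp_apply,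
      MulEquiv.coe_toMonoidHom, ofAdd_toAdd, MulEquiv.symm_apply_apply, toEnvelGroup_map_apply]
    exact congrArg (Finsupp.single · 1) (Quotient.out_eq o)
  convert Finsupp.linearIndependent_single_one ℤ (orbitRel.Quotient (EnvelGroup R) R) using 1
  all_goals first | exact funext hL | exact Subsingleton.elim _ _ | rfl

theorem span_orbit_out :
    Submodule.span ℤ (Set.range fun o : orbitRel.Quotient (EnvelGroup R) R =>
      (F (toEnvelGroup R o.out)).toAdd) = ⊤ := by
  refine Submodule.eq_top_iff'.mpr fun x => ?_
  suffices h : ∀ g, (F g).toAdd ∈ Submodule.span ℤ (Set.range fun o : orbitRel.Quotient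
      (EnvelGroup R) R => (F (toEnvelGroup R o.out)).toAdd) by
    simpa using h (F.symm (Multiplicative.ofAdd x))
  intro g
  have hg : g ∈ closure (Set.range (toEnvelGroup R)) := by simp [closure_range_toEnvelGroup]
  induction hg using closure_induction with
  | mem _ hz =>
    obtain ⟨y, rfl⟩ := hz
    rw [← toEnvelGroup_eq_of_mem_orbit (commute_of_mulEquiv F)
      (orbitRel_apply.mp (Quotient.mk_out y))]
    exact Submodule.subset_span ⟨⟦y⟧, rfl⟩
  | one => simp
  | mul g h _ _ ihg ihh => simpa using add_mem ihg ihh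
  | inv g _ ihg => simpa using neg_mem ihg

theorem card_orbitRel_quotient_eq_finrank (F : EnvelGroup R ≃* Multiplicative A) :
    Nat.card (orbitRel.Quotient (EnvelGroup R) R) = Module.finrank ℤ A :=
  (Module.finrank_eq_nat_card_basis
    (Module.Basis.mk (linearIndependent_orbit_out F) (span_orbit_out F).ge)).symm

end

section Quandle

variable {Q : Type*} [Quandle Q] (hG : ∀ g h : EnvelGroup Q, Commute g h)
include hG

theorem act_eq_self_of_mem_orbit {x y z : Q} (hy : y ∈ orbit (EnvelGroup Q) x)
    (hz : z ∈ orbit (EnvelGroup Q) x) : y ◃ z = z := by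
  rw [act_eq_smul_of_mem_orbit hG hy, ← toEnvelGroup_eq_of_mem_orbit hG hz, toEnvelGroup_smul,
    Quandle.fix]

theorem orbit_eq_orbit_zpowers {a : Q} {g : EnvelGroup Q}
    (hgen : closure {g, toEnvelGroup Q a} = ⊤) :
    orbit (EnvelGroup Q) a = orbit (zpowers g) a := by
  refine Set.Subset.antisymm ?_ (orbit_subgroup_subset _ _)
  rintro _ ⟨h, rfl⟩
  obtain ⟨i, j, rfl⟩ :=
    Subgroup.exists_zpow_mul_zpow_eq_of_mem_closure_pair hG (hgen ▸ mem_top h)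
  have hfix : toEnvelGroup Q a ∈ stabilizer (EnvelGroup Q) a := Quandle.fix
  refine ⟨⟨g ^ i, zpow_mem_zpowers g i⟩, ?_⟩
  change g ^ i • a = (g ^ i * _) • a
  rw [mul_smul, mem_stabilizer_iff.mp (zpow_mem hfix j)]

theorem exists_equiv_UQ [Finite Q] {a b : Q} (hab : b ∉ orbit (EnvelGroup Q) a)
    (hcover : ∀ x, x ∈ orbit (EnvelGroup Q) a ∨ x ∈ orbit (EnvelGroup Q) b) :
    ∃ n m : ℕ, 0 < n ∧ 0 < m ∧
      ∃ f : Q ≃ UQ n m, ∀ x y : Q, f (x ◃ y) = f x ◃ f y := by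
  set α : EnvelGroup Q := toEnvelGroup Q a
  set β : EnvelGroup Q := toEnvelGroup Q b
  have hgen := closure_pair_eq_top hG hcover
  have hA : orbit (EnvelGroup Q) a = orbit (zpowers β⁻¹) a := by
    rw [zpowers_inv]; exact orbit_eq_orbit_zpowers hG (by rwa [Set.pair_comm])
  have hB : orbit (EnvelGroup Q) b = orbit (zpowers α⁻¹) b := by
    rw [zpowers_inv]; exact orbit_eq_orbit_zpowers hG hgen
  -- `x_i ↦ β⁻¹ ^ i • a` and `y_r ↦ α⁻¹ ^ r • b`
  let eA := (orbitZPowersEquiv β⁻¹ a).symm.trans (Equiv.setCongr hA.symm)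
  let eB := (orbitZPowersEquiv α⁻¹ b).symm.trans (Equiv.setCongr hB.symm)
  let u : UQ _ _ → Q := Sum.elim (fun i => eA i) fun r => eB r
  have hu : ∀ v w, u (v ◃ w) = u v ◃ u w := by
    rintro (i | r) (j | s)
    · exact (act_eq_self_of_mem_orbit hG (eA i).2 (eA j).2).symm
    · change (eB (s - 1) : Q) = (eA i : Q) ◃ (eB s : Q)
      rw [act_eq_smul_of_mem_orbit hG (eA i).2]
      exact (orbitZPowersEquiv_symm_sub_one α⁻¹ b s).trans (congrArg (· • _) (inv_inv α))
    · change (eA (j - 1) : Q) = (eB r : Q) ◃ (eA j : Q)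
      rw [act_eq_smul_of_mem_orbit hG (eB r).2]
      exact (orbitZPowersEquiv_symm_sub_one β⁻¹ a j).trans (congrArg (· • _) (inv_inv β))
    · exact (act_eq_self_of_mem_orbit hG (eB r).2 (eB s).2).symm
  have hdisj (i r) : (eA i : Q) ≠ eB r := fun h => hab <| orbit_eq_iff.mp <|
    (orbit_eq_iff.mpr (eB r).2).symm.trans (orbit_eq_iff.mpr (h ▸ (eA i).2))
  have hbij : Function.Bijective u := by
    constructor
    · rintro (i | r) (j | s) h
      · exact congrArg Sum.inl (eA.injective (Subtype.ext h))
      · exact absurd h (hdisj i s)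
      · exact absurd h.symm (hdisj j r)
      · exact congrArg Sum.inr (eB.injective (Subtype.ext h))
    · intro x
      rcases hcover x with h | h
      · exact ⟨Sum.inl (eA.symm ⟨x, h⟩), by simp [u]⟩
      · exact ⟨Sum.inr (eB.symm ⟨x, h⟩), by simp [u]⟩
  exact ⟨_, _, Nat.pos_of_neZero _, Nat.pos_of_neZero _, (Equiv.ofBijective u hbij).symm,
    (Equiv.ofBijective u hbij).symm_act hu⟩

end Quandle

end Rack

namespace UQ

variable {n m d : ℕ}

def shiftX (c : ZMod d) : Equiv.Perm (ZMod d × ZMod d) :=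
  Equiv.prodCongr (Equiv.addRight 1) (Equiv.addRight (-c))

def shiftY (c : ZMod d) : Equiv.Perm (ZMod d × ZMod d) :=
  Equiv.prodShear (Equiv.refl _) fun u => Equiv.addRight (u + c)

/-- `x_i ↦ ((u, v) ↦ (u + 1, v - i))` and `y_r ↦ ((u, v) ↦ (u, v + u + r))`; `x_i` and `y_r`
commute up to the central translation `v ↦ v + 1`. -/
def toPerm (hn : d ∣ n) (hm : d ∣ m) :
    UQ n m →◃ Quandle.Conj (Equiv.Perm (ZMod d × ZMod d)) where
  toFun := Sum.elim (fun i => shiftX (ZMod.castHom hn _ i)) fun r => shiftY (ZMod.castHom hm _ r)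
  map_act' {x y} := by
    rw [Quandle.conj_act_eq_conj, eq_mul_inv_iff_mul_eq]
    rcases x with i | r <;> rcases y with j | s <;> ext ⟨u, v⟩ <;>
      simp only [Shelf.act, opInv, Sum.elim_inl, Sum.elim_inr, map_sub, map_one] <;>
      simp [shiftX, shiftY] <;> ring

@[simp]
theorem toPerm_inl (hn : d ∣ n) (hm : d ∣ m) (i : ZMod n) :
    toPerm hn hm (Sum.inl i) = shiftX (ZMod.castHom hn _ i) := rfl

@[simp]
theorem toPerm_inr (hn : d ∣ n) (hm : d ∣ m) (r : ZMod m) :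
    toPerm hn hm (Sum.inr r) = shiftY (ZMod.castHom hm _ r) := rfl

theorem coprime_of_surjective {R : Type*} [Rack R] (hG : ∀ g h : Rack.EnvelGroup R, Commute g h)
    (f : R →◃ UQ n m) (hf : Function.Surjective f) : n.Coprime m := by
  obtain ⟨a, ha⟩ := hf (Sum.inl 0)
  obtain ⟨b, hb⟩ := hf (Sum.inr 0)
  have h := congrArg (· (0, 0)) ((hG (Rack.toEnvelGroup R a) (Rack.toEnvelGroup R b)).map
    (Rack.toEnvelGroup.map ((toPerm (Nat.gcd_dvd_left n m) (Nat.gcd_dvd_right n m)).comp f))).eq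
  simp [Rack.toEnvelGroup_map_apply, ShelfHom.comp_apply, ha, hb, shiftX, shiftY] at h
  exact ZMod.one_eq_zero_iff.mp h.symm

end UQ

theorem finite_quandle_envelGroup_ZxZ (Q : Type) [Quandle Q] [Finite Q]
    (h : Nonempty (Rack.EnvelGroup Q ≃* Multiplicative (ℤ × ℤ))) :
    ∃ n m : ℕ, 0 < n ∧ 0 < m ∧ Nat.Coprime n m ∧
      ∃ f : Q ≃ UQ n m, ∀ a b : Q, f (Shelf.act a b) = Shelf.act (f a) (f b) := by
  obtain ⟨F⟩ := h
  have hG := commute_of_mulEquiv F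
  have hcard : Nat.card (orbitRel.Quotient (Rack.EnvelGroup Q) Q) = 2 := by
    simp [Rack.card_orbitRel_quotient_eq_finrank F]
  obtain ⟨a, b, hab, hcover⟩ := exists_pair_of_card_orbitRel_quotient_eq_two hcard
  obtain ⟨n, m, hn, hm, f, hf⟩ := Rack.exists_equiv_UQ hG hab hcover
  exact ⟨n, m, hn, hm, UQ.coprime_of_surjective hG ⟨f, hf _ _⟩ f.surjective, f, hf⟩
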